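/- Let k ≥ 2 and l ≥ 3 be coprime integers with k + l = n, let Y ⊆ T_n be a finite set generating a submonoid M_n with U_{k,l} ⊆ M_n, and let 𝓜 = (Z_n, Σ, δ, z₀, G) be any DFA based on Y (with arbitrary start state z₀ and arbitrary set of final states G). Then sc(root(L(𝓜))) ≤ |M_n| − n(n−1)/2 = sc(root(L(A_{Σ,Y}))). -/

import Mathlib

/-- `root L` = words some positive power of which lies in `L`. -/
def root {A : Type} (L : Language A) : Language A :=
  {w | ∃ m : ℕ, 1 ≤ m ∧ (List.replicate m w).flatten ∈ L}

/-- A language is regular if some DFA with finitely many states recognizes it. -/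
def IsReg {A : Type} (L : Language A) : Prop :=
  ∃ (σ : Type) (_ : Fintype σ) (M : DFA A σ), M.accepts = L

/-- The state complexity of a language: the least number of states of a DFA recognizing it. -/
noncomputable def sc {A : Type} (L : Language A) : ℕ :=
  sInf {m | ∃ (σ : Type) (_ : Fintype σ) (M : DFA A σ), M.accepts = L ∧ Fintype.card σ = m}

/-- The submonoid of transformations of `Fin n` generated by `X`:
all finite compositions of elements of `X` (including the identity). -/
def MGen {n : ℕ} (X : Set (Fin n → Fin n)) : Set (Fin n → Fin n) :=
  {f | ∃ l : List (Fin n → Fin n), (∀ g ∈ l, g ∈ X) ∧ f = l.foldr (· ∘ ·) id}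

/-- The rank of a transformation: the number of elements of its image. -/
def rank {n : ℕ} (f : Fin n → Fin n) : ℕ := (Finset.image f Finset.univ).card

/-- The permutation of `Z_n = {1,…,n}` (coded as `Fin n`, with `i : Fin n` standing for
`i+1 ∈ Z_n`) with cycle decomposition `(1 2 ⋯ k)(k+1 k+2 ⋯ n)`. -/
def twoCycle (n k : ℕ) (i : Fin n) : Fin n :=
  ⟨(if i.val + 1 = k then 0 else if i.val + 1 = n then k else i.val + 1) % n,
    Nat.mod_lt _ i.pos⟩

/-- The set `U_{k,l} ⊆ T_n` (with `l = n - k`): all `γ` such that exactly one of the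
following holds: (1) `γ = α^m` for some `m ≥ 1`, where `α = (1 ⋯ k)(k+1 ⋯ n)`;
(2) `γ(i) = γ(j)` for some `i ∈ {1,…,k}`, `j ∈ {k+1,…,n}`, and some
`m ∈ {k+1,…,n}` is not in the image of `γ`. -/
def Ukl (n k : ℕ) : Set (Fin n → Fin n) :=
  {γ | Xor'
    (∃ m : ℕ, 1 ≤ m ∧ γ = (twoCycle n k)^[m])
    ((∃ i j : Fin n, i.val < k ∧ k ≤ j.val ∧ γ i = γ j) ∧
      ∃ m : Fin n, k ≤ m.val ∧ m ∉ Set.range γ)}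

/-- `M` is a DFA based on `X ⊆ T_n`: each letter acts as an element of `X ∪ {id}`,
and every element of `X` is the action of some letter. -/
def IsBasedOn {n : ℕ} {A : Type} (X : Set (Fin n → Fin n)) (M : DFA A (Fin n)) : Prop :=
  ∃ Ψ : A → (Fin n → Fin n), (∀ a q, M.step q a = Ψ a q) ∧
    (∀ a, Ψ a ∈ X ∪ {id}) ∧ X ⊆ Set.range Ψ

/-- `M` is (a copy of) the DFA `A_{Σ,X}`: based on `X`, with start state `1`,
final-state set `{1}`, the letter actions given by a map `Ψ` that is bijective from an
`|X|`-element subset of the alphabet onto `X` and maps all other letters to the identity. -/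
def IsCanonical {n : ℕ} {A : Type} (X : Set (Fin n → Fin n)) (M : DFA A (Fin n)) : Prop :=
  M.start.val = 0 ∧ M.accept = {q : Fin n | q.val = 0} ∧
    ∃ Ψ : A → (Fin n → Fin n), (∀ a q, M.step q a = Ψ a q) ∧
      ∃ S : Set A, Set.BijOn Ψ S X ∧ ∀ a ∉ S, Ψ a = id

/-- The transformation `η` is a final state of the DFA `𝓜*` built from `𝓜`:
some positive iterate of `η` sends the start state of `𝓜` into its final states. -/
def StarFinal {n : ℕ} {A : Type} (M : DFA A (Fin n)) (η : Fin n → Fin n) : Prop :=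
  ∃ m : ℕ, 1 ≤ m ∧ η^[m] M.start ∈ M.accept

/-- `η` and `θ` are equivalent states of the DFA `𝓜*` built from `𝓜`
(reading a word `w` from state `η` in `𝓜*` leads to the transformation
`q ↦ δ_w(η q)`). -/
def StarEquiv {n : ℕ} {A : Type} (M : DFA A (Fin n)) (η θ : Fin n → Fin n) : Prop :=
  ∀ w : List A,
    StarFinal M (fun q => M.evalFrom (η q) w) ↔ StarFinal M (fun q => M.evalFrom (θ q) w)

/-- `x` is unique in the image of `ρ`: only one point maps to it. -/
def UniqueInImage {n : ℕ} (ρ : Fin n → Fin n) (x : Fin n) : Prop :=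
  ∀ i j : Fin n, ρ i = x → ρ j = x → i = j

/-- For a rank-2 transformation `η` with image `{i,j}`, `θ` is its complement:
`θ` sends points of `η⁻¹(i)` to `j` and points of `η⁻¹(j)` to `i`. -/
def IsCompl2 {n : ℕ} (η θ : Fin n → Fin n) : Prop :=
  ∀ z w : Fin n, η z ≠ η w → θ z = η w

/-- the two-valued "point map": `c ↦ d`, everything else `↦ e`. -/
def ptMap {n : ℕ} (c d e : Fin n) : Fin n → Fin n := fun x => if x = c then d else e

lemma twoCycle_injective {n k : ℕ} (hk : 2 ≤ k) (hkn : k < n) :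
    Function.Injective (twoCycle n k) := by
  intro i j h
  have hi := i.isLt
  have hj := j.isLt
  unfold twoCycle at h
  rw [Fin.mk.injEq] at h
  apply Fin.ext
  have hX : ∀ m : ℕ, m < n →
      (if m + 1 = k then 0 else if m + 1 = n then k else m + 1) < n := by
    intro m hm; split_ifs <;> omega
  rw [Nat.mod_eq_of_lt (hX _ hi), Nat.mod_eq_of_lt (hX _ hj)] at h
  split_ifs at h <;> omega

lemma exists_avoid3 {α : Type*} (x y z d e : α) (hxy : x ≠ y) (hxz : x ≠ z) (hyz : y ≠ z) :
    ∃ w, (w = x ∨ w = y ∨ w = z) ∧ w ≠ d ∧ w ≠ e := by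
  by_cases hx : x ≠ d ∧ x ≠ e
  · exact ⟨x, Or.inl rfl, hx⟩
  by_cases hy : y ≠ d ∧ y ≠ e
  · exact ⟨y, Or.inr (Or.inl rfl), hy⟩
  push_neg at hx hy
  refine ⟨z, Or.inr (Or.inr rfl), ?_, ?_⟩
  · rintro rfl
    rcases eq_or_ne x z with h | h
    · exact hxz h
    · have hxe := hx h
      rcases eq_or_ne y z with h2 | h2
      · exact hyz h2
      · exact hxy (hxe.trans (hy h2).symm)
  · rintro rfl
    rcases eq_or_ne x d with h | h
    · rcases eq_or_ne y d with h2 | h2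
      · exact hxy (h.trans h2.symm)
      · exact hyz (hy h2)
    · exact hxz (hx h)

lemma ptMap_mem_Ukl {n k l : ℕ} (hk : 2 ≤ k) (hl : 3 ≤ l) (hn : k + l = n)
    (c d e : Fin n) : ptMap c d e ∈ Ukl n k := by
  have hn5 : 5 ≤ n := by omega
  -- a low point ≠ c
  have hx0 : (0 : ℕ) < n := by omega
  have hx1 : (1 : ℕ) < n := by omega
  set x0 : Fin n := ⟨0, hx0⟩ with hx0d
  set x1 : Fin n := ⟨1, hx1⟩ with hx1d
  obtain ⟨i₀, hi₀k, hi₀c⟩ : ∃ i₀ : Fin n, i₀.val < k ∧ i₀ ≠ c := by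
    by_cases h : c = x0
    · exact ⟨x1, by simp [hx1d]; omega, by rw [h]; simp [hx0d, hx1d, Fin.ext_iff]⟩
    · exact ⟨x0, by simp [hx0d]; omega, fun hh => h hh.symm⟩
  have hyb0 : k < n := by omega
  have hyb1 : k + 1 < n := by omega
  have hyb2 : k + 2 < n := by omega
  set y0 : Fin n := ⟨k, hyb0⟩ with hy0d
  set y1 : Fin n := ⟨k + 1, hyb1⟩ with hy1d
  set y2 : Fin n := ⟨k + 2, hyb2⟩ with hy2d
  obtain ⟨j₀, hj₀k, hj₀c⟩ : ∃ j₀ : Fin n, k ≤ j₀.val ∧ j₀ ≠ c := by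
    by_cases h : c = y0
    · exact ⟨y1, by simp [hy1d], by rw [h]; simp [hy0d, hy1d, Fin.ext_iff]⟩
    · exact ⟨y0, by simp [hy0d], fun hh => h hh.symm⟩
  have hij : i₀ ≠ j₀ := by
    intro hh; rw [hh] at hi₀k; omega
  have hγi : ptMap c d e i₀ = e := if_neg hi₀c
  have hγj : ptMap c d e j₀ = e := if_neg hj₀c
  refine Or.inr ⟨⟨⟨i₀, j₀, hi₀k, hj₀k, hγi.trans hγj.symm⟩, ?_⟩, ?_⟩
  · -- missing high point
    obtain ⟨w, hw, hwd, hwe⟩ := exists_avoid3 y0 y1 y2 d e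
      (by simp [hy0d, hy1d, Fin.ext_iff]) (by simp [hy0d, hy2d, Fin.ext_iff])
      (by simp [hy1d, hy2d, Fin.ext_iff])
    refine ⟨w, ?_, ?_⟩
    · rcases hw with rfl | rfl | rfl <;> simp [hy0d, hy1d, hy2d]
    · rintro ⟨x, hx⟩
      unfold ptMap at hx
      split_ifs at hx
      · exact hwd hx.symm
      · exact hwe hx.symm
  · rintro ⟨m, _, hm⟩
    have hinj : Function.Injective ((twoCycle n k)^[m]) :=
      Function.Injective.iterate (twoCycle_injective hk (by omega)) m
    rw [← hm] at hinj
    exact hij (hinj (hγi.trans hγj.symm))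

/-- orbit of `z` under `h` eventually (at positive time) meets `G`. -/
def hits {n : ℕ} (z : Fin n) (G : Set (Fin n)) (h : Fin n → Fin n) : Prop :=
  ∃ m : ℕ, 1 ≤ m ∧ h^[m] z ∈ G

lemma hits_empty {n : ℕ} {z : Fin n} {h : Fin n → Fin n} : ¬ hits z ∅ h := by
  rintro ⟨m, _, hm⟩; exact hm

lemma hits_congr_offG_mp {n : ℕ} {z : Fin n} {G : Set (Fin n)} (hz : z ∉ G)
    {f g : Fin n → Fin n} (hfg : ∀ x, x ∉ G → f x = g x) {ρ : Fin n → Fin n}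
    (h : hits z G (ρ ∘ f)) : hits z G (ρ ∘ g) := by
  classical
  have hex : ∃ s, 1 ≤ s ∧ (ρ ∘ f)^[s] z ∈ G := h
  obtain ⟨hm01, hm0G⟩ := Nat.find_spec hex
  have hmin : ∀ s, 1 ≤ s → s < Nat.find hex → (ρ ∘ f)^[s] z ∉ G :=
    fun s h1 h2 hG => Nat.find_min hex h2 ⟨h1, hG⟩
  have aux : ∀ t, (∀ s, 1 ≤ s → s < t → (ρ ∘ f)^[s] z ∉ G) →
      (ρ ∘ f)^[t] z = (ρ ∘ g)^[t] z := by
    intro t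
    induction t with
    | zero => intro _; rfl
    | succ t ih =>
      intro H
      have ht := ih (fun s h1 h2 => H s h1 (Nat.lt_succ_of_lt h2))
      have hnotG : (ρ ∘ f)^[t] z ∉ G := by
        rcases Nat.eq_zero_or_pos t with h0 | h0
        · subst h0; simpa using hz
        · exact H t h0 (Nat.lt_succ_self t)
      rw [Function.iterate_succ_apply', Function.iterate_succ_apply', ← ht,
        Function.comp_apply, Function.comp_apply, hfg _ hnotG]
  exact ⟨Nat.find hex, hm01, by rw [← aux (Nat.find hex) hmin]; exact hm0G⟩

lemma hits_congr_offG {n : ℕ} {z : Fin n} {G : Set (Fin n)} (hz : z ∉ G)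
    {f g : Fin n → Fin n} (hfg : ∀ x, x ∉ G → f x = g x) (ρ : Fin n → Fin n) :
    hits z G (ρ ∘ f) ↔ hits z G (ρ ∘ g) :=
  ⟨hits_congr_offG_mp hz hfg, hits_congr_offG_mp hz (fun x hx => (hfg x hx).symm)⟩

lemma hits_eta_iff {n : ℕ} {z : Fin n} {G : Set (Fin n)} (hzG : z ∈ G) (i j : Fin n)
    (ρ : Fin n → Fin n) :
    hits z G (ρ ∘ ptMap z i j) ↔ (ρ i ∈ G ∨ ρ j ∈ G ∨ ρ i = z ∨ ρ j = z) := by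
  have hz : ptMap z i j z = i := if_pos rfl
  constructor
  · rintro ⟨m, hm, hG⟩
    obtain ⟨m', rfl⟩ : ∃ m', m = m' + 1 := ⟨m - 1, by omega⟩
    have hmem : (ρ ∘ ptMap z i j)^[m' + 1] z = ρ i ∨ (ρ ∘ ptMap z i j)^[m' + 1] z = ρ j := by
      rw [Function.iterate_succ_apply']
      simp only [Function.comp_apply, ptMap]
      split_ifs <;> simp
    rcases hmem with h | h <;> rw [h] at hG
    · exact Or.inl hG
    · exact Or.inr (Or.inl hG)
  · intro h
    by_cases hiz : ρ i = z
    · exact ⟨1, le_refl _, by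
        simpa [Function.comp_apply, hz, hiz] using hzG⟩
    have h2 : (ρ ∘ ptMap z i j)^[2] z = ρ j := by
      have : (ρ ∘ ptMap z i j) z = ρ i := by simp [Function.comp_apply, hz]
      rw [show (2 : ℕ) = 1 + 1 from rfl, Function.iterate_succ_apply, Function.iterate_one]
      rw [show (ρ ∘ ptMap z i j) z = ρ i from this]
      simp only [Function.comp_apply, ptMap, if_neg hiz]
    rcases h with hiG | hjG | hiz' | hjz
    · exact ⟨1, le_refl _, by simpa [Function.comp_apply, hz] using hiG⟩
    · exact ⟨2, by omega, by rw [h2]; exact hjG⟩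
    · exact absurd hiz' hiz
    · exact ⟨2, by omega, by rw [h2, hjz]; exact hzG⟩

lemma hits_eta_swap {n : ℕ} {z : Fin n} {G : Set (Fin n)} (hzG : z ∈ G) (i j : Fin n)
    (ρ : Fin n → Fin n) :
    hits z G (ρ ∘ ptMap z i j) ↔ hits z G (ρ ∘ ptMap z j i) := by
  rw [hits_eta_iff hzG, hits_eta_iff hzG]; tauto

/-- `z` is a periodic point of `h`. -/
def FinZ {n : ℕ} (z : Fin n) (h : Fin n → Fin n) : Prop := ∃ m : ℕ, 1 ≤ m ∧ h^[m] z = z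

lemma not_finZ {n : ℕ} {z y : Fin n} {h : Fin n → Fin n}
    (h1 : h z = y) (h2 : h y = y) (hy : y ≠ z) : ¬ FinZ z h := by
  have key : ∀ m, 1 ≤ m → h^[m] z = y := by
    intro m hm
    induction m with
    | zero => omega
    | succ m ih =>
      rcases Nat.eq_zero_or_pos m with h0 | h0
      · subst h0; simpa using h1
      · rw [Function.iterate_succ_apply', ih h0, h2]
  rintro ⟨m, hm, hz⟩
  exact hy ((key m hm).symm.trans hz)

lemma distinguish {n k l : ℕ} (hk : 2 ≤ k) (hl : 3 ≤ l) (hn : k + l = n) (z : Fin n)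
    {f g : Fin n → Fin n} (hfg : f ≠ g)
    (hsp : ¬ ∃ i j : Fin n, i ≠ j ∧ f = ptMap z i j ∧ g = ptMap z j i) :
    ∃ ρ ∈ Ukl n k,
      (FinZ z (ρ ∘ f) ∧ ¬ FinZ z (ρ ∘ g)) ∨ (FinZ z (ρ ∘ g) ∧ ¬ FinZ z (ρ ∘ f)) := by
  classical
  by_cases hA : f z = g z
  · -- Case B : same value at z, differ at some p ≠ z
    obtain ⟨p, hp⟩ := Function.ne_iff.mp hfg
    have hpz : p ≠ z := by rintro rfl; exact hp hA
    by_cases hsa : f z = f p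
    · -- use ρ = ptMap (g p) z p ; g is final, f is not
      have hsb : f z ≠ g p := fun h => hp (hsa.symm.trans h)
      refine ⟨ptMap (g p) z p, ptMap_mem_Ukl hk hl hn _ _ _, Or.inr ⟨⟨2, by omega, ?_⟩, ?_⟩⟩
      · rw [show (2 : ℕ) = 1 + 1 from rfl, Function.iterate_succ_apply, Function.iterate_one]
        have e1 : (ptMap (g p) z p ∘ g) z = p := by
          simp only [Function.comp_apply, ptMap, ← hA, if_neg hsb]
        rw [e1]
        simp [Function.comp_apply, ptMap]
      · refine not_finZ (y := p) ?_ ?_ hpz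
        · simp only [Function.comp_apply, ptMap, if_neg hsb]
        · simp only [Function.comp_apply, ptMap, ← hsa, if_neg hsb]
    · -- use ρ = ptMap (f p) z p ; f is final, g is not
      have hgb : g p ≠ f p := fun h => hp h.symm
      have hgz : g z ≠ f p := by rw [← hA]; exact hsa
      refine ⟨ptMap (f p) z p, ptMap_mem_Ukl hk hl hn _ _ _, Or.inl ⟨⟨2, by omega, ?_⟩, ?_⟩⟩
      · rw [show (2 : ℕ) = 1 + 1 from rfl, Function.iterate_succ_apply, Function.iterate_one]
        have e1 : (ptMap (f p) z p ∘ f) z = p := by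
          simp only [Function.comp_apply, ptMap, if_neg hsa]
        rw [e1]
        simp [Function.comp_apply, ptMap]
      · refine not_finZ (y := p) ?_ ?_ hpz
        · simp only [Function.comp_apply, ptMap, if_neg hgz]
        · simp only [Function.comp_apply, ptMap, if_neg hgb]
  · -- Case A : f z ≠ g z
    by_cases hgex : ∃ y, y ≠ z ∧ g y ≠ f z
    · obtain ⟨y, hyz, hgy⟩ := hgex
      have hba : g z ≠ f z := fun h => hA h.symm
      refine ⟨ptMap (f z) z y, ptMap_mem_Ukl hk hl hn _ _ _, Or.inl ⟨⟨1, le_refl _, ?_⟩, ?_⟩⟩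
      · simp [Function.iterate_one, Function.comp_apply, ptMap]
      · refine not_finZ (y := y) ?_ ?_ hyz
        · simp only [Function.comp_apply, ptMap, if_neg hba]
        · simp only [Function.comp_apply, ptMap, if_neg hgy]
    · by_cases hfex : ∃ y, y ≠ z ∧ f y ≠ g z
      · obtain ⟨y, hyz, hfy⟩ := hfex
        refine ⟨ptMap (g z) z y, ptMap_mem_Ukl hk hl hn _ _ _, Or.inr ⟨⟨1, le_refl _, ?_⟩, ?_⟩⟩
        · simp [Function.iterate_one, Function.comp_apply, ptMap]
        · refine not_finZ (y := y) ?_ ?_ hyz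
          · simp only [Function.comp_apply, ptMap, if_neg hA]
          · simp only [Function.comp_apply, ptMap, if_neg hfy]
      · exfalso
        push_neg at hgex hfex
        refine hsp ⟨f z, g z, hA, ?_, ?_⟩
        · funext x
          by_cases hx : x = z
          · subst hx; simp [ptMap]
          · rw [show f x = g z from hfex x hx, ptMap, if_neg hx]
        · funext x
          by_cases hx : x = z
          · subst hx; simp [ptMap]
          · rw [show g x = f z from hgex x hx, ptMap, if_neg hx]

lemma id_mem_MGen {n : ℕ} (X : Set (Fin n → Fin n)) : id ∈ MGen X :=
  ⟨[], by simp, rfl⟩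

lemma comp_mem_MGen {n : ℕ} {X : Set (Fin n → Fin n)} {f ψ : Fin n → Fin n}
    (hf : f ∈ MGen X) (hψ : ψ ∈ X) : ψ ∘ f ∈ MGen X := by
  obtain ⟨L, hL, rfl⟩ := hf
  exact ⟨ψ :: L, by
    intro g hg
    rcases List.mem_cons.mp hg with rfl | hg
    · exact hψ
    · exact hL g hg, rfl⟩

/-- counting: a quotient with `card I` many disjoint nontrivial identified pairs. -/
lemma card_quotient_add_le {S : Type} [Fintype S] (E : Setoid S) [Fintype (Quotient E)]
    {I : Type} [Fintype I] (u v : I → S) (hu : Function.Injective u)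
    (hv : Function.Injective v) (huv : ∀ t t', u t ≠ v t') (hE : ∀ t, E.r (u t) (v t)) :
    Fintype.card (Quotient E) + Fintype.card I ≤ Fintype.card S := by
  classical
  rw [← Fintype.card_sum]
  have key : ∀ t : I, (Quotient.mk E (u t)) = (Quotient.mk E (v t)) := fun t => Quotient.sound (hE t)
  apply Fintype.card_le_of_injective
    (Sum.elim (fun q : Quotient E => q.out)
      (fun t : I => if (Quotient.mk E (u t)).out = u t then v t else u t))
  have main : ∀ (q : Quotient E) (t : I),
      q.out ≠ (if (Quotient.mk E (u t)).out = u t then v t else u t) := by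
    intro q t
    by_cases hif : (Quotient.mk E (u t)).out = u t
    · rw [if_pos hif]
      intro h
      have hq : q = Quotient.mk E (u t) := by rw [← Quotient.out_eq q, h, ← key t]
      exact huv t t ((hif.symm.trans (by rw [← hq, h])))
    · rw [if_neg hif]
      intro h
      have hq : q = Quotient.mk E (u t) := by rw [← Quotient.out_eq q, h]
      exact hif (by rw [← hq]; exact h)
  rintro (q1 | t1) (q2 | t2) h
  · simp only [Sum.elim_inl] at h
    rw [← Quotient.out_eq q1, ← Quotient.out_eq q2, h]
  · exact absurd h (main q1 t2)
  · exact absurd h.symm (main q2 t1)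
  · simp only [Sum.elim_inr] at h
    split_ifs at h with h1 h2 h2
    · exact congrArg Sum.inr (hv h)
    · exact absurd h.symm (huv t2 t1)
    · exact absurd h (huv t1 t2)
    · exact congrArg Sum.inr (hu h)

/-- the index type for unordered pairs. -/
abbrev pairIdx (n : ℕ) : Type := (j : Fin n) × Fin j.val

lemma card_pairIdx (n : ℕ) : Fintype.card (pairIdx n) = n * (n - 1) / 2 := by
  rw [Fintype.card_sigma]
  simp only [Fintype.card_fin]
  rw [Fin.sum_univ_eq_sum_range (fun i => i) n]
  exact Finset.sum_range_id n

lemma ptMap_inj {n : ℕ} (hn2 : 2 ≤ n) {c d e d' e' : Fin n}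
    (h : ptMap c d e = ptMap c d' e') : d = d' ∧ e = e' := by
  obtain ⟨x, hx⟩ : ∃ x : Fin n, x ≠ c := by
    rcases eq_or_ne c ⟨0, by omega⟩ with h0 | h0
    · exact ⟨⟨1, by omega⟩, by rw [h0]; simp [Fin.ext_iff]⟩
    · exact ⟨⟨0, by omega⟩, fun hh => h0 hh.symm⟩
  constructor
  · have := congrFun h c; simpa [ptMap] using this
  · have := congrFun h x; simpa [ptMap, if_neg hx] using this

lemma upper_exists {n k l : ℕ} (hk : 2 ≤ k) (hl : 3 ≤ l) (hn : k + l = n)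
    {Y : Set (Fin n → Fin n)} (hU : Ukl n k ⊆ MGen Y)
    {A : Type} (M : DFA A (Fin n)) (hbased : IsBasedOn Y M) :
    ∃ (σ : Type) (_ : Fintype σ) (B : DFA A σ),
      B.accepts = root M.accepts ∧
        Fintype.card σ + n * (n - 1) / 2 ≤ (MGen Y).ncard := by
  classical
  have hn2 : 2 ≤ n := by omega
  obtain ⟨Ψ, hstep, hΨmem, hΨsurj⟩ := hbased
  have hclosed : ∀ (a : A) (f : Fin n → Fin n), f ∈ MGen Y → Ψ a ∘ f ∈ MGen Y := by
    intro a f hf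
    rcases hΨmem a with h | h
    · exact comp_mem_MGen hf h
    · rw [Set.mem_singleton_iff] at h
      rw [h, Function.id_comp]; exact hf
  haveI : Fintype {f : Fin n → Fin n // f ∈ MGen Y} := Fintype.ofFinite _
  set z := M.start with hzdef
  set G := M.accept with hGdef
  let Mstar : DFA A {f : Fin n → Fin n // f ∈ MGen Y} :=
    { step := fun f a => ⟨Ψ a ∘ f.1, hclosed a f.1 f.2⟩
      start := ⟨id, id_mem_MGen Y⟩
      accept := {f | hits z G f.1} }
  have hδ : ∀ (w : List A) (f : {f : Fin n → Fin n // f ∈ MGen Y}),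
      (Mstar.evalFrom f w).1 = (fun q => M.evalFrom q w) ∘ f.1 := by
    intro w
    induction w with
    | nil => intro f; rfl
    | cons a w ih =>
      intro f
      rw [show Mstar.evalFrom f (a :: w) = Mstar.evalFrom (Mstar.step f a) w from rfl, ih]
      funext q
      simp only [Function.comp_apply]
      rw [show M.evalFrom (f.1 q) (a :: w) = M.evalFrom (M.step (f.1 q) a) w from rfl,
        hstep a (f.1 q)]
      rfl
  have hpow : ∀ (w : List A) (m : ℕ) (q : Fin n),
      M.evalFrom q ((List.replicate m w).flatten) = (fun q => M.evalFrom q w)^[m] q := by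
    intro w m
    induction m with
    | zero => intro q; rfl
    | succ m ih =>
      intro q
      rw [List.replicate_succ, List.flatten_cons, DFA.evalFrom_of_append,
        Function.iterate_succ_apply]
      exact ih _
  have haccepts : Mstar.accepts = root M.accepts := by
    ext w
    rw [DFA.mem_accepts]
    have h1 : (Mstar.evalFrom Mstar.start w).1 = fun q => M.evalFrom q w := by
      rw [hδ]; exact Function.comp_id _
    show hits z G (Mstar.evalFrom Mstar.start w).1 ↔ _
    rw [h1]
    unfold root hits
    simp only [Set.mem_setOf_eq, DFA.mem_accepts]
    refine exists_congr fun m => and_congr_right fun _ => ?_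
    rw [show M.eval ((List.replicate m w).flatten) =
      M.evalFrom M.start ((List.replicate m w).flatten) from rfl, hpow]
  let E : Setoid {f : Fin n → Fin n // f ∈ MGen Y} :=
    ⟨fun f g => ∀ ρ : Fin n → Fin n, hits z G (ρ ∘ f.1) ↔ hits z G (ρ ∘ g.1),
      ⟨fun _ _ => Iff.rfl, fun h ρ => (h ρ).symm, fun h1 h2 ρ => (h1 ρ).trans (h2 ρ)⟩⟩
  haveI : Fintype (Quotient E) := @Quotient.fintype _ _ E (fun _ _ => Classical.dec _)
  let QD : DFA A (Quotient E) :=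
    { step := fun q a =>
        Quotient.lift (fun f => Quotient.mk E (Mstar.step f a))
          (fun f g h => Quotient.sound (fun ρ => by
            simpa [Function.comp_assoc] using h (ρ ∘ Ψ a))) q
      start := Quotient.mk E Mstar.start
      accept := {q | Quotient.liftOn q (fun f => hits z G f.1)
        (fun f g h => propext (by simpa using h id))} }
  have heval : ∀ (w : List A) (f : {f : Fin n → Fin n // f ∈ MGen Y}),
      QD.evalFrom (Quotient.mk E f) w = Quotient.mk E (Mstar.evalFrom f w) := by
    intro w
    induction w with
    | nil => intro f; rfl
    | cons a w ih =>
      intro f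
      rw [show QD.evalFrom (Quotient.mk E f) (a :: w)
        = QD.evalFrom (QD.step (Quotient.mk E f) a) w from rfl]
      rw [show QD.step (Quotient.mk E f) a = Quotient.mk E (Mstar.step f a) from rfl, ih]
      rfl
  have hQacc : QD.accepts = Mstar.accepts := by
    ext w
    rw [DFA.mem_accepts, DFA.mem_accepts]
    rw [show QD.eval w = QD.evalFrom (Quotient.mk E Mstar.start) w from rfl, heval]
    exact Iff.rfl
  have hSncard : (MGen Y).ncard = Fintype.card {f : Fin n → Fin n // f ∈ MGen Y} := by
    rw [← Nat.card_coe_set_eq, Nat.card_eq_fintype_card]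
  refine ⟨Quotient E, inferInstance, QD, by rw [hQacc, haccepts], ?_⟩
  rw [hSncard]
  by_cases hzG : z ∈ G ∨ G = ∅
  · -- the η/θ family
    have hswap : ∀ (i j : Fin n) (ρ : Fin n → Fin n),
        hits z G (ρ ∘ ptMap z i j) ↔ hits z G (ρ ∘ ptMap z j i) := by
      rcases hzG with h | h
      · exact fun i j ρ => hits_eta_swap h i j ρ
      · intro i j ρ
        constructor <;> intro hh <;> exact absurd (h ▸ hh) hits_empty
    let big : pairIdx n → Fin n := fun p => p.1
    let small : pairIdx n → Fin n := fun p => ⟨p.2.val, lt_trans p.2.isLt p.1.isLt⟩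
    have hbs : ∀ p : pairIdx n, (small p).val < (big p).val := fun p => p.2.isLt
    have hidx : ∀ p p' : pairIdx n, big p = big p' → small p = small p' → p = p' := by
      rintro ⟨j, c⟩ ⟨j', c'⟩ h1 h2
      obtain rfl : j = j' := h1
      obtain rfl : c = c' := Fin.ext (by simpa [Fin.ext_iff] using h2)
      rfl
    let u : pairIdx n → {f : Fin n → Fin n // f ∈ MGen Y} :=
      fun p => ⟨ptMap z (big p) (small p), hU (ptMap_mem_Ukl hk hl hn _ _ _)⟩
    let v : pairIdx n → {f : Fin n → Fin n // f ∈ MGen Y} :=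
      fun p => ⟨ptMap z (small p) (big p), hU (ptMap_mem_Ukl hk hl hn _ _ _)⟩
    have hcount := card_quotient_add_le E u v
      (fun p p' h => by
        obtain ⟨h1, h2⟩ := ptMap_inj hn2 (congrArg Subtype.val h)
        exact hidx _ _ h1 h2)
      (fun p p' h => by
        obtain ⟨h1, h2⟩ := ptMap_inj hn2 (congrArg Subtype.val h)
        exact hidx _ _ h2 h1)
      (fun p p' h => by
        obtain ⟨h1, h2⟩ := ptMap_inj hn2 (congrArg Subtype.val h)
        have e1 : (big p).val = (small p').val := congrArg Fin.val h1
        have e2 : (small p).val = (big p').val := congrArg Fin.val h2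
        have := hbs p; have := hbs p'; omega)
      (fun p => fun ρ => hswap (big p) (small p) ρ)
    rw [card_pairIdx] at hcount
    exact hcount
  · push_neg at hzG
    obtain ⟨hznG, hGne⟩ := hzG
    obtain ⟨g₀, hg₀⟩ := hGne
    have hoff : ∀ (d d' i : Fin n) (ρ : Fin n → Fin n),
        hits z G (ρ ∘ ptMap g₀ d i) ↔ hits z G (ρ ∘ ptMap g₀ d' i) := by
      intro d d' i ρ
      refine hits_congr_offG hznG (fun x hx => ?_) ρ
      have hxg : x ≠ g₀ := fun hh => hx (hh ▸ hg₀)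
      simp [ptMap, if_neg hxg]
    have hhalf : ∀ t : Fin (n / 2), 2 * t.val + 1 < n := by
      intro t; have := t.isLt; omega
    let u : Fin n × Fin (n / 2) → {f : Fin n → Fin n // f ∈ MGen Y} :=
      fun p => ⟨ptMap g₀ ⟨2 * p.2.val, by have := hhalf p.2; omega⟩ p.1,
        hU (ptMap_mem_Ukl hk hl hn _ _ _)⟩
    let v : Fin n × Fin (n / 2) → {f : Fin n → Fin n // f ∈ MGen Y} :=
      fun p => ⟨ptMap g₀ ⟨2 * p.2.val + 1, hhalf p.2⟩ p.1,
        hU (ptMap_mem_Ukl hk hl hn _ _ _)⟩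
    have hcount := card_quotient_add_le E u v
      (fun p p' h => by
        obtain ⟨h1, h2⟩ := ptMap_inj hn2 (congrArg Subtype.val h)
        have e1 : 2 * p.2.val = 2 * p'.2.val := congrArg Fin.val h1
        exact Prod.ext h2 (Fin.ext (by omega)))
      (fun p p' h => by
        obtain ⟨h1, h2⟩ := ptMap_inj hn2 (congrArg Subtype.val h)
        have e1 : 2 * p.2.val + 1 = 2 * p'.2.val + 1 := congrArg Fin.val h1
        exact Prod.ext h2 (Fin.ext (by omega)))
      (fun p p' h => by
        obtain ⟨h1, h2⟩ := ptMap_inj hn2 (congrArg Subtype.val h)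
        have e1 : 2 * p.2.val = 2 * p'.2.val + 1 := congrArg Fin.val h1
        omega)
      (fun p => fun ρ => hoff _ _ _ ρ)
    have hcard2 : Fintype.card (Fin n × Fin (n / 2)) = n * (n / 2) := by
      rw [Fintype.card_prod, Fintype.card_fin, Fintype.card_fin]
    rw [hcard2] at hcount
    have harith : n * (n - 1) / 2 ≤ n * (n / 2) := by
      have h1 : n * (n - 1) ≤ n * (2 * (n / 2)) := Nat.mul_le_mul_left n (by omega)
      calc n * (n - 1) / 2 ≤ n * (2 * (n / 2)) / 2 := Nat.div_le_div_right h1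
        _ = 2 * (n * (n / 2)) / 2 := by rw [Nat.mul_left_comm]
        _ = n * (n / 2) := by rw [Nat.mul_div_cancel_left _ (by norm_num)]
    omega

lemma dfa_pow {A σ : Type*} (M : DFA A σ) (w : List A) (m : ℕ) (q : σ) :
    M.evalFrom q ((List.replicate m w).flatten) = (fun q => M.evalFrom q w)^[m] q := by
  induction m generalizing q with
  | zero => rfl
  | succ m ih =>
    rw [List.replicate_succ, List.flatten_cons, DFA.evalFrom_of_append,
      Function.iterate_succ_apply]
    exact ih _

lemma word_of_mem {n : ℕ} {A : Type} (M' : DFA A (Fin n)) (Ψ : A → (Fin n → Fin n))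
    (hstep : ∀ a q, M'.step q a = Ψ a q) {Y : Set (Fin n → Fin n)}
    (hsurj : Y ⊆ Set.range Ψ) :
    ∀ L : List (Fin n → Fin n), (∀ g ∈ L, g ∈ Y) →
      ∃ w : List A, ∀ q, M'.evalFrom q w = L.foldr (· ∘ ·) id q := by
  intro L
  induction L with
  | nil => exact fun _ => ⟨[], fun q => rfl⟩
  | cons g L ih =>
    intro hL
    obtain ⟨w', hw'⟩ := ih (fun x hx => hL x (List.mem_cons_of_mem g hx))
    obtain ⟨a, ha⟩ := hsurj (hL g (List.mem_cons_self))
    refine ⟨w' ++ [a], fun q => ?_⟩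
    rw [DFA.evalFrom_of_append, hw',
      show M'.evalFrom (L.foldr (· ∘ ·) id q) [a] = M'.step (L.foldr (· ∘ ·) id q) a from rfl,
      hstep, ha]
    rfl

lemma lower_bound {n k l : ℕ} (hk : 2 ≤ k) (hl : 3 ≤ l) (hn : k + l = n)
    {Y : Set (Fin n → Fin n)} (hU : Ukl n k ⊆ MGen Y)
    {A : Type} (M' : DFA A (Fin n)) (hcan : IsCanonical Y M')
    {σ : Type} [Fintype σ] (B : DFA A σ) (hB : B.accepts = root M'.accepts) :
    (MGen Y).ncard ≤ Fintype.card σ + n * (n - 1) / 2 := by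
  classical
  haveI : Fintype {f : Fin n → Fin n // f ∈ MGen Y} := Fintype.ofFinite _
  obtain ⟨hstart, haccept, Ψ, hstep, S0, hbij, hid⟩ := hcan
  set z : Fin n := ⟨0, by omega⟩ with hzd
  have hz0 : M'.start = z := Fin.ext hstart
  have hacc : ∀ q : Fin n, q ∈ M'.accept ↔ q = z := by
    intro q; rw [haccept]; simp [Set.mem_setOf_eq, Fin.ext_iff, hzd]
  have hsurj : Y ⊆ Set.range Ψ := fun y hy =>
    let ⟨a, _, ha⟩ := hbij.surjOn hy; ⟨a, ha⟩
  have hroot : ∀ w : List A, w ∈ root M'.accepts ↔ FinZ z (fun q => M'.evalFrom q w) := by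
    intro w; unfold root FinZ
    simp only [Set.mem_setOf_eq, DFA.mem_accepts]
    refine exists_congr fun m => and_congr_right fun _ => ?_
    rw [show M'.eval ((List.replicate m w).flatten)
        = M'.evalFrom M'.start ((List.replicate m w).flatten) from rfl, dfa_pow, hz0]
    exact hacc _
  have hwex : ∀ h : {f : Fin n → Fin n // f ∈ MGen Y},
      ∃ w : List A, ∀ q, M'.evalFrom q w = h.1 q := by
    rintro ⟨h, hh⟩
    obtain ⟨L, hL, hLe⟩ := hh
    obtain ⟨w, hw⟩ := word_of_mem M' Ψ hstep hsurj L hL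
    exact ⟨w, fun q => by rw [hw]; exact (congrFun hLe q).symm⟩
  choose W hW using hwex
  have hFkey : ∀ h h' : {f : Fin n → Fin n // f ∈ MGen Y},
      B.eval (W h) = B.eval (W h') → h.1 ≠ h'.1 →
      ∃ i j : Fin n, i ≠ j ∧ h.1 = ptMap z i j ∧ h'.1 = ptMap z j i := by
    intro h h' hF hne
    by_contra hsp
    obtain ⟨ρ, hρU, hxor⟩ := distinguish hk hl hn z hne hsp
    obtain ⟨uw, huw⟩ : ∃ w : List A, ∀ q, M'.evalFrom q w = ρ q := by
      obtain ⟨L, hL, hLe⟩ := hU hρU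
      obtain ⟨w, hw⟩ := word_of_mem M' Ψ hstep hsurj L hL
      exact ⟨w, fun q => by rw [hw]; exact (congrFun hLe q).symm⟩
    have hmem : ∀ e : {f : Fin n → Fin n // f ∈ MGen Y},
        (W e ++ uw) ∈ B.accepts ↔ FinZ z (ρ ∘ e.1) := by
      intro e
      rw [hB, hroot]
      have heq : (fun q => M'.evalFrom q (W e ++ uw)) = ρ ∘ e.1 := by
        funext q; rw [DFA.evalFrom_of_append, hW e q, huw]; rfl
      rw [heq]
    have hsame : ((W h ++ uw) ∈ B.accepts) ↔ ((W h' ++ uw) ∈ B.accepts) := by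
      rw [DFA.mem_accepts, DFA.mem_accepts,
        show B.eval (W h ++ uw) = B.evalFrom (B.eval (W h)) uw from
          DFA.evalFrom_of_append _ _ _ _,
        show B.eval (W h' ++ uw) = B.evalFrom (B.eval (W h')) uw from
          DFA.evalFrom_of_append _ _ _ _,
        hF]
    rw [hmem h, hmem h'] at hsame
    rcases hxor with ⟨h1, h2⟩ | ⟨h1, h2⟩
    · exact h2 (hsame.mp h1)
    · exact h2 (hsame.mpr h1)
  have hΦ : Fintype.card {f : Fin n → Fin n // f ∈ MGen Y}
      ≤ Fintype.card (σ ⊕ pairIdx n) := by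
    apply Fintype.card_le_of_injective (fun h =>
      if hh : ∃ p : pairIdx n,
          h.1 = ptMap z p.1 ⟨p.2.val, lt_trans p.2.isLt p.1.isLt⟩ then
        Sum.inr hh.choose
      else Sum.inl (B.eval (W h)))
    intro h h' he
    dsimp only at he
    by_cases h1 : ∃ p : pairIdx n,
        h.1 = ptMap z p.1 ⟨p.2.val, lt_trans p.2.isLt p.1.isLt⟩ <;>
      by_cases h2 : ∃ p : pairIdx n,
        h'.1 = ptMap z p.1 ⟨p.2.val, lt_trans p.2.isLt p.1.isLt⟩
    · rw [dif_pos h1, dif_pos h2] at he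
      have e1 := h1.choose_spec
      have e2 := h2.choose_spec
      have hcc : h1.choose = h2.choose := by injection he
      rw [← hcc] at e2
      exact Subtype.ext (e1.trans e2.symm)
    · rw [dif_pos h1, dif_neg h2] at he; exact absurd he (by simp)
    · rw [dif_neg h1, dif_pos h2] at he; exact absurd he (by simp)
    · rw [dif_neg h1, dif_neg h2] at he
      have he' : B.eval (W h) = B.eval (W h') := by injection he
      by_cases hvals : h.1 = h'.1
      · exact Subtype.ext hvals
      · exfalso
        obtain ⟨i, j, hij, hfi, hgi⟩ := hFkey h h' he' hvals
        rcases lt_trichotomy i.val j.val with ht | ht | ht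
        · exact h2 ⟨⟨j, ⟨i.val, ht⟩⟩, by rw [hgi]⟩
        · exact hij (Fin.ext ht)
        · exact h1 ⟨⟨i, ⟨j.val, ht⟩⟩, by rw [hfi]⟩
  rw [Fintype.card_sum, card_pairIdx] at hΦ
  rw [← Nat.card_coe_set_eq, Nat.card_eq_fintype_card]
  exact hΦ

theorem theorem_3_20' {n k l : ℕ} (hk : 2 ≤ k) (hl : 3 ≤ l)
    (hn : k + l = n)
    (Y : Set (Fin n → Fin n)) (hU : Ukl n k ⊆ MGen Y)
    {A : Type} [Fintype A]
    (M : DFA A (Fin n)) (hbased : IsBasedOn Y M) :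
    sc (root M.accepts) + n * (n - 1) / 2 ≤ (MGen Y).ncard ∧
      ∀ M' : DFA A (Fin n), IsCanonical Y M' →
        sc (root M'.accepts) + n * (n - 1) / 2 = (MGen Y).ncard := by
  classical
  have hmain : ∀ M₀ : DFA A (Fin n), IsBasedOn Y M₀ →
      sc (root M₀.accepts) + n * (n - 1) / 2 ≤ (MGen Y).ncard := by
    intro M₀ hb
    obtain ⟨σ, inst, B, hacc, hcard⟩ := upper_exists hk hl hn hU M₀ hb
    have hsc : sc (root M₀.accepts) ≤ Fintype.card σ := Nat.sInf_le ⟨σ, inst, B, hacc, rfl⟩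
    omega
  refine ⟨hmain M hbased, ?_⟩
  intro M' hcan
  have hbased' : IsBasedOn Y M' := by
    obtain ⟨h1, h2, Ψ, hstep, S0, hbij, hid⟩ := hcan
    refine ⟨Ψ, hstep, ?_, ?_⟩
    · intro a
      by_cases ha : a ∈ S0
      · exact Or.inl (hbij.mapsTo ha)
      · exact Or.inr (by rw [hid a ha]; rfl)
    · exact fun y hy => let ⟨a, _, ha⟩ := hbij.surjOn hy; ⟨a, ha⟩
  have hle := hmain M' hbased'
  have hne : {m | ∃ (σ : Type) (_ : Fintype σ) (B : DFA A σ),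
      B.accepts = root M'.accepts ∧ Fintype.card σ = m}.Nonempty := by
    obtain ⟨σ, inst, B, hacc, _⟩ := upper_exists hk hl hn hU M' hbased'
    exact ⟨Fintype.card σ, σ, inst, B, hacc, rfl⟩
  obtain ⟨σ, inst, B, hacc, hcard⟩ := Nat.sInf_mem hne
  have hlow := @lower_bound n k l hk hl hn Y hU A M' hcan σ inst B hacc
  rw [hcard] at hlow
  have hscdef : sInf {m | ∃ (σ : Type) (_ : Fintype σ) (B : DFA A σ),
      B.accepts = root M'.accepts ∧ Fintype.card σ = m} = sc (root M'.accepts) := rfl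
  omega

/-- **Theorem 3.20.** Let `Y` generate `M_n ⊇ U_{k,l}` (`k ≥ 2`, `l ≥ 3` coprime,
`k + l = n`) and let `𝓜` be any DFA based on `Y`, with arbitrary start and final
states.  Then `sc (root (L 𝓜)) ≤ |M_n| - n(n-1)/2 = sc (root (L (A_{Σ,Y})))`. -/
theorem theorem_3_20 (n k l : ℕ) (hk : 2 ≤ k) (hl : 3 ≤ l)
    (hco : Nat.Coprime k l) (hn : k + l = n)
    (Y : Set (Fin n → Fin n)) (hYfin : Y.Finite) (hU : Ukl n k ⊆ MGen Y)
    {A : Type} [Fintype A] (hcard : Y.ncard ≤ Fintype.card A)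
    (M : DFA A (Fin n)) (hbased : IsBasedOn Y M) :
    sc (root M.accepts) + n * (n - 1) / 2 ≤ (MGen Y).ncard ∧
      ∀ M' : DFA A (Fin n), IsCanonical Y M' →
        sc (root M'.accepts) + n * (n - 1) / 2 = (MGen Y).ncard := by
  exact theorem_3_20' hk hl hn Y hU M hbased
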